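/- Let r ∈ ℕ, r ≥ 1, n = 2^r. For all 0 ≤ j, l ≤ r−1, the local coherence of the Fourier–Haar matrix satisfies μ(j,l) ≤ (π⁴/16) · 2^{−j} · 2^{−|j−l|/2}. -/

import Mathlib

/-- The discrete Fourier transform of `x ∈ ℂ^(2^r)`:
`Fx(ω) = n^{-1/2} ∑_{t=0}^{n-1} x(t) e^{2πiωt/n}` with `n = 2^r`. -/
noncomputable def dft (r : ℕ) (x : Fin (2^r) → ℂ) (ω : ℤ) : ℂ :=
  (Real.sqrt (2^r) : ℂ)⁻¹ *
    ∑ t : Fin (2^r), x t * Complex.exp (2 * Real.pi * Complex.I * (ω : ℂ) * ((t : ℕ) : ℂ) / (2^r : ℂ))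

/-- The Haar scaling vector `ψ(t) = 2^{-r/2}`. -/
noncomputable def haarPsi (r : ℕ) : Fin (2^r) → ℂ :=
  fun _ => (((2:ℝ) ^ (-(r:ℝ)/2) : ℝ) : ℂ)

/-- The discrete Haar wavelet at scale `j` and position `p`. -/
noncomputable def haarPhi (r j p : ℕ) : Fin (2^r) → ℂ := fun t =>
  if p * 2^(r-j) ≤ (t:ℕ) ∧ (t:ℕ) < p * 2^(r-j) + 2^(r-j-1) then
    (((2:ℝ) ^ (((j:ℝ) - r)/2) : ℝ) : ℂ)
  else if p * 2^(r-j) + 2^(r-j-1) ≤ (t:ℕ) ∧ (t:ℕ) < (p+1) * 2^(r-j) then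
    -(((2:ℝ) ^ (((j:ℝ) - r)/2) : ℝ) : ℂ)
  else 0

/-- The frequency bands: `W_0 = {0,1}` and
`W_j = {-2^j+1,…,-2^{j-1}} ∪ {2^{j-1}+1,…,2^j}` for `j ≥ 1`. -/
noncomputable def bandW (j : ℕ) : Finset ℤ :=
  if j = 0 then {0, 1}
  else Finset.Icc (-(2:ℤ)^j + 1) (-(2:ℤ)^(j-1)) ∪ Finset.Icc ((2:ℤ)^(j-1) + 1) ((2:ℤ)^j)

theorem bandW_nonempty (j : ℕ) : (bandW j).Nonempty := by
  unfold bandW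
  split
  · exact ⟨0, by simp⟩
  · refine Finset.Nonempty.mono Finset.subset_union_right ⟨(2:ℤ)^j, ?_⟩
    rw [Finset.mem_Icc]
    refine ⟨?_, le_refl _⟩
    have h1 : (1:ℤ) ≤ (2:ℤ)^(j-1) := one_le_pow₀ (by norm_num)
    have h2 : (2:ℤ)^(j-1) + (2:ℤ)^(j-1) ≤ (2:ℤ)^j := by
      rw [← two_mul, ← pow_succ']
      exact pow_le_pow_right₀ (by norm_num) (by omega)
    omega

/-- The number of columns of the Fourier–Haar block `U_{jl}`: level `0` contributes the two
vectors `ψ, φ_{0,0}`, and level `l ≥ 1` contributes the `2^l` wavelets `φ_{l,p}`. -/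
def numCols (l : ℕ) : ℕ := if l = 0 then 2 else 2^l

theorem numCols_pos (l : ℕ) : 0 < numCols l := by
  unfold numCols; split <;> positivity

/-- The entry of the Fourier–Haar block `U_{jl}` in row `ω` and column `q`. -/
noncomputable def Uentry (r l : ℕ) (ω : ℤ) (q : ℕ) : ℂ :=
  if l = 0 then (if q = 0 then dft r (haarPsi r) ω else dft r (haarPhi r 0 0) ω)
  else dft r (haarPhi r l q) ω

/-- The coherence `μ(U_{jl}) = max_{ω,q} |(U_{jl})_{ω,q}|²` of the Fourier–Haar block. -/
noncomputable def coherence (r j l : ℕ) : ℝ :=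
  ((bandW j) ×ˢ Finset.range (numCols l)).sup'
    (Finset.Nonempty.product (bandW_nonempty j)
      ⟨0, Finset.mem_range.mpr (numCols_pos l)⟩)
    (fun q => ‖Uentry r l q.1 q.2‖ ^ 2)

/-- The Fourier–Haar block `U_{jl}`, with rows indexed by `ω ∈ W_j` and columns given by the
DFT of the level-`l` Haar vectors. -/
noncomputable def Umat (r j l : ℕ) : Matrix (bandW j) (Fin (numCols l)) ℂ :=
  fun ω q => Uentry r l (ω : ℤ) (q : ℕ)

/-- The `ℓ² → ℓ²` operator norm (largest singular value) of the Fourier–Haar block. -/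
noncomputable def UopNorm (r j l : ℕ) : ℝ :=
  ‖LinearMap.toContinuousLinearMap (Matrix.toEuclideanLin (Umat r j l))‖

/-- The `(j,l)`-th local coherence `μ(j,l) = √μ(U_{jl}) · max_{l' < r} √μ(U_{jl'})`. -/
noncomputable def localCoh (r : ℕ) (hr : 1 ≤ r) (j l : ℕ) : ℝ :=
  Real.sqrt (coherence r j l) *
    (Finset.range r).sup' ⟨0, Finset.mem_range.mpr hr⟩
      (fun l' => Real.sqrt (coherence r j l'))

/-!
Every entry of `U_{jl}` has modulus at most `(π²/4) 2^{-j/2} 2^{-|j-l|/2}`, and `μ(j,l)` is a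
product of two such bounds. With `x = e^{2πiω/n}`, the DFT of `φ_{l,p}` is `2^{(l-2r)/2}` times a
difference of two geometric sums of `2^{r-l-1}` consecutive powers of `x`. Bounding each sum by
its length gives `2^{-l/2}`, enough when `j ≤ l`; when `j > l`, bound it by `2/|x - 1|` instead
and use Jordan's inequality `|x - 1| = 2|sin(πω/n)| ≥ 4|ω|/n ≥ 2^{j+1}/n` on the band `W_j`.
The scaling vector `ψ` is constant, so its DFT vanishes at every `ω ∈ W_j` with `j ≥ 1`.
-/

open Finset Complex

noncomputable def twiddle (r : ℕ) (ω : ℤ) : ℂ :=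
  exp (I * ((2 * Real.pi * ω / 2 ^ r : ℝ) : ℂ))

section Twiddle

variable (r : ℕ) (ω : ℤ)

theorem norm_twiddle : ‖twiddle r ω‖ = 1 := by
  rw [twiddle, mul_comm]
  exact norm_exp_ofReal_mul_I _

theorem twiddle_pow_two_pow : twiddle r ω ^ 2 ^ r = 1 := by
  rw [twiddle, ← exp_nat_mul, ← exp_int_mul_two_pi_mul_I ω]
  congr 1
  push_cast
  field_simp

theorem dft_eq_sum_twiddle_pow (x : Fin (2 ^ r) → ℂ) :
    dft r x ω = (((2 : ℝ) ^ (-(r : ℝ) / 2) : ℝ) : ℂ) * ∑ t, x t * twiddle r ω ^ (t : ℕ) := by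
  have hscale : (Real.sqrt (2 ^ r))⁻¹ = (2 : ℝ) ^ (-(r : ℝ) / 2) := by
    rw [Real.sqrt_eq_rpow, ← Real.rpow_natCast, ← Real.rpow_mul zero_le_two,
      ← Real.rpow_neg zero_le_two]
    ring_nf
  rw [dft, ← hscale, ofReal_inv]
  congr 2 with t
  rw [twiddle, ← exp_nat_mul]
  congr 2
  push_cast
  ring

end Twiddle

theorem mul_abs_le_norm_exp_I_mul_ofReal_sub_one {θ : ℝ} (hθ : |θ| ≤ Real.pi) :
    2 / Real.pi * |θ| ≤ ‖exp (I * θ) - 1‖ := by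
  have hsin := Real.mul_abs_le_abs_sin (x := θ / 2) (by rw [abs_div, abs_two]; linarith)
  rw [norm_exp_I_mul_ofReal_sub_one, norm_mul, Real.norm_eq_abs, Real.norm_eq_abs, abs_two]
  rw [abs_div, abs_two] at hsin
  linarith

theorem four_mul_abs_div_le_norm_twiddle_sub_one {r : ℕ} {ω : ℤ}
    (hω : 2 * |(ω : ℝ)| ≤ 2 ^ r) : 4 * |(ω : ℝ)| / 2 ^ r ≤ ‖twiddle r ω - 1‖ := by
  have hθ : |2 * Real.pi * ω / 2 ^ r| = Real.pi * (2 * |(ω : ℝ)| / 2 ^ r) := by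
    rw [abs_div, abs_mul, abs_mul, abs_two, abs_of_pos Real.pi_pos, abs_pow, abs_two]
    ring
  have hθπ : |2 * Real.pi * ω / 2 ^ r| ≤ Real.pi := by
    rw [hθ]
    exact mul_le_of_le_one_right Real.pi_pos.le ((div_le_one (by positivity)).mpr hω)
  calc 4 * |(ω : ℝ)| / 2 ^ r = 2 / Real.pi * |2 * Real.pi * ω / 2 ^ r| := by
        rw [hθ]; field_simp; ring
    _ ≤ ‖twiddle r ω - 1‖ := mul_abs_le_norm_exp_I_mul_ofReal_sub_one hθπ

section GeomSum

variable {𝕜 : Type*} [NormedDivisionRing 𝕜] {x : 𝕜}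

theorem norm_geom_sum_Ico_le_card (hx : ‖x‖ ≤ 1) (b h : ℕ) :
    ‖∑ i ∈ Ico b (b + h), x ^ i‖ ≤ h := by
  calc ‖∑ i ∈ Ico b (b + h), x ^ i‖
      ≤ ∑ i ∈ Ico b (b + h), ‖x ^ i‖ := norm_sum_le _ _
    _ ≤ ∑ _i ∈ Ico b (b + h), (1 : ℝ) :=
        sum_le_sum fun i _ => by rw [norm_pow]; exact pow_le_one₀ (norm_nonneg _) hx
    _ = h := by simp

theorem norm_geom_sum_Ico_le_of_ne_one (hx : ‖x‖ ≤ 1) (hx1 : x ≠ 1) (b h : ℕ) :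
    ‖∑ i ∈ Ico b (b + h), x ^ i‖ ≤ 2 / ‖x - 1‖ := by
  rw [geom_sum_Ico hx1 (Nat.le_add_right b h), norm_div]
  gcongr
  calc ‖x ^ (b + h) - x ^ b‖ ≤ ‖x ^ (b + h)‖ + ‖x ^ b‖ := norm_sub_le _ _
    _ ≤ 1 + 1 := by
        rw [norm_pow, norm_pow]
        gcongr <;> exact pow_le_one₀ (norm_nonneg _) hx
    _ = 2 := one_add_one_eq_two

end GeomSum

theorem abs_mem_Icc_of_mem_bandW {j : ℕ} {ω : ℤ} (hj : j ≠ 0) (hω : ω ∈ bandW j) :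
    |ω| ∈ Set.Icc (2 ^ (j - 1)) (2 ^ j) := by
  have hpow : (2 : ℤ) ^ j = 2 * 2 ^ (j - 1) := by rw [← pow_succ']; congr 1; omega
  have hpos : (0 : ℤ) < 2 ^ (j - 1) := by positivity
  rw [bandW, if_neg hj, mem_union, mem_Icc, mem_Icc, hpow] at hω
  rw [Set.mem_Icc, hpow]
  generalize (2 : ℤ) ^ (j - 1) = m at *
  rcases hω with hω | hω
  · rw [abs_of_neg (by omega : ω < 0)]; omega
  · rw [abs_of_pos (by omega : 0 < ω)]; omega

theorem two_pow_div_le_norm_twiddle_sub_one {r j : ℕ} {ω : ℤ} (hj : j ≠ 0) (hjr : j < r)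
    (hω : ω ∈ bandW j) : 2 * 2 ^ j / 2 ^ r ≤ ‖twiddle r ω - 1‖ := by
  obtain ⟨hlo, hhi⟩ := abs_mem_Icc_of_mem_bandW hj hω
  have hpow : (2 : ℤ) ^ j = 2 * 2 ^ (j - 1) := by rw [← pow_succ']; congr 1; omega
  have hlo' : (2 : ℝ) ^ j ≤ 2 * |(ω : ℝ)| := by
    exact_mod_cast (by omega : (2 : ℤ) ^ j ≤ 2 * |ω|)
  have hhi' : 2 * |(ω : ℝ)| ≤ 2 ^ r := by
    have : (2 : ℤ) * 2 ^ j ≤ 2 ^ r := by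
      rw [← pow_succ']; exact pow_le_pow_right₀ one_le_two hjr
    exact_mod_cast (by omega : 2 * |ω| ≤ (2 : ℤ) ^ r)
  calc 2 * 2 ^ j / 2 ^ r ≤ 4 * |(ω : ℝ)| / 2 ^ r :=
        div_le_div_of_nonneg_right (by linarith) (by positivity)
    _ ≤ ‖twiddle r ω - 1‖ := four_mul_abs_div_le_norm_twiddle_sub_one hhi'

theorem twiddle_ne_one_of_mem_bandW {r j : ℕ} {ω : ℤ} (hj : j ≠ 0) (hjr : j < r)
    (hω : ω ∈ bandW j) : twiddle r ω ≠ 1 := by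
  rw [← sub_ne_zero, ← norm_pos_iff]
  exact lt_of_lt_of_le (by positivity) (two_pow_div_le_norm_twiddle_sub_one hj hjr hω)

section DFT

variable {r : ℕ} {ω : ℤ}

theorem dft_const_eq_zero (c : ℂ) (h : twiddle r ω ≠ 1) : dft r (fun _ => c) ω = 0 := by
  rw [dft_eq_sum_twiddle_pow, ← mul_sum, Fin.sum_univ_eq_sum_range (fun t => twiddle r ω ^ t),
    geom_sum_eq h, twiddle_pow_two_pow, sub_self, zero_div, mul_zero, mul_zero]

theorem norm_dft_le (x : Fin (2 ^ r) → ℂ) :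
    ‖dft r x ω‖ ≤ (2 : ℝ) ^ (-(r : ℝ) / 2) * ∑ t, ‖x t‖ := by
  rw [dft_eq_sum_twiddle_pow, norm_mul, norm_real, Real.norm_of_nonneg (by positivity)]
  gcongr
  refine (norm_sum_le _ _).trans_eq (sum_congr rfl fun t _ => ?_)
  rw [norm_mul, norm_pow, norm_twiddle, one_pow, mul_one]

theorem norm_dft_haarPsi_le_one : ‖dft r (haarPsi r) ω‖ ≤ 1 := by
  refine (norm_dft_le _).trans_eq ?_
  simp only [haarPsi, norm_real, Real.norm_of_nonneg (Real.rpow_nonneg zero_le_two _), sum_const,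
    card_univ, Fintype.card_fin, nsmul_eq_mul, Nat.cast_pow, Nat.cast_ofNat]
  rw [← Real.rpow_natCast, mul_left_comm, ← Real.rpow_add two_pos, ← Real.rpow_add two_pos]
  ring_nf
  exact Real.rpow_zero 2

end DFT

section Haar

variable {r j l p : ℕ}

theorem sum_haarPhi_mul (hl : l < r) (hp : p < 2 ^ l) (g : ℕ → ℂ) :
    ∑ t : Fin (2 ^ r), haarPhi r l p t * g t =
      (((2 : ℝ) ^ (((l : ℝ) - r) / 2) : ℝ) : ℂ) *
        (∑ i ∈ Ico (p * 2 ^ (r - l)) (p * 2 ^ (r - l) + 2 ^ (r - l - 1)), g i -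
          ∑ i ∈ Ico (p * 2 ^ (r - l) + 2 ^ (r - l - 1))
            (p * 2 ^ (r - l) + 2 ^ (r - l - 1) + 2 ^ (r - l - 1)), g i) := by
  have hsplit : 2 ^ (r - l) = 2 ^ (r - l - 1) + 2 ^ (r - l - 1) := by
    rw [← two_mul, ← pow_succ']; congr 1; omega
  have hN : p * 2 ^ (r - l) + 2 ^ (r - l - 1) + 2 ^ (r - l - 1) ≤ 2 ^ r := by
    rw [add_assoc, ← hsplit, ← add_one_mul]
    calc (p + 1) * 2 ^ (r - l) ≤ 2 ^ l * 2 ^ (r - l) := Nat.mul_le_mul_right _ hp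
      _ = 2 ^ r := by rw [← pow_add, Nat.add_sub_cancel' hl.le]
  have hpointwise : ∀ t : Fin (2 ^ r), haarPhi r l p t * g t =
      (((2 : ℝ) ^ (((l : ℝ) - r) / 2) : ℝ) : ℂ) *
        ((if (t : ℕ) ∈ Ico (p * 2 ^ (r - l)) (p * 2 ^ (r - l) + 2 ^ (r - l - 1)) then g t
          else 0) -
          if (t : ℕ) ∈ Ico (p * 2 ^ (r - l) + 2 ^ (r - l - 1))
            (p * 2 ^ (r - l) + 2 ^ (r - l - 1) + 2 ^ (r - l - 1)) then g t else 0) := by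
    intro t
    simp only [haarPhi, mem_Ico, add_one_mul]
    generalize p * 2 ^ (r - l) = a
    rw [hsplit]
    generalize 2 ^ (r - l - 1) = h
    split_ifs <;> first | (exfalso; omega) | ring
  have hrange : ∀ {b d}, d ≤ 2 ^ r → range (2 ^ r) ∩ Ico b d = Ico b d := fun hd =>
    inter_eq_right.mpr fun i hi => mem_range.mpr ((mem_Ico.mp hi).2.trans_le hd)
  rw [sum_congr rfl fun t _ => hpointwise t, ← mul_sum, sum_sub_distrib,
    Fin.sum_univ_eq_sum_range (fun i => if i ∈ Ico _ _ then g i else 0),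
    Fin.sum_univ_eq_sum_range (fun i => if i ∈ Ico _ _ then g i else 0),
    sum_ite_mem, sum_ite_mem, hrange ((Nat.le_add_right _ _).trans hN), hrange hN]

theorem norm_dft_haarPhi_le (hl : l < r) (hp : p < 2 ^ l) {ω : ℤ} {B : ℝ}
    (hB : ∀ b, ‖∑ i ∈ Ico b (b + 2 ^ (r - l - 1)), twiddle r ω ^ i‖ ≤ B) :
    ‖dft r (haarPhi r l p) ω‖ ≤ 2 ^ ((l : ℝ) / 2 - r) * (2 * B) := by
  rw [dft_eq_sum_twiddle_pow, sum_haarPhi_mul hl hp, ← mul_assoc, ← ofReal_mul,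
    ← Real.rpow_add two_pos, norm_mul, norm_real,
    Real.norm_of_nonneg (Real.rpow_nonneg zero_le_two _)]
  rw [show -(r : ℝ) / 2 + ((l : ℝ) - r) / 2 = (l : ℝ) / 2 - r by ring]
  gcongr
  refine (norm_sub_le _ _).trans ?_
  linarith [hB (p * 2 ^ (r - l)), hB (p * 2 ^ (r - l) + 2 ^ (r - l - 1))]

theorem norm_dft_haarPhi_le_rpow_neg_half (hl : l < r) (hp : p < 2 ^ l) (ω : ℤ) :
    ‖dft r (haarPhi r l p) ω‖ ≤ 2 ^ (-(l : ℝ) / 2) := by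
  refine (norm_dft_haarPhi_le hl hp fun b =>
    norm_geom_sum_Ico_le_card (norm_twiddle r ω).le b _).trans_eq ?_
  rw [Nat.cast_pow, Nat.cast_ofNat, ← pow_succ', Nat.sub_add_cancel (by omega : 1 ≤ r - l),
    ← Real.rpow_natCast, Nat.cast_sub hl.le, ← Real.rpow_add two_pos]
  ring_nf

theorem norm_dft_haarPhi_le_of_lt_of_mem_bandW (hlj : l < j) (hjr : j < r) (hp : p < 2 ^ l)
    {ω : ℤ} (hω : ω ∈ bandW j) :
    ‖dft r (haarPhi r l p) ω‖ ≤ 2 * 2 ^ ((l : ℝ) / 2 - j) := by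
  have hj : j ≠ 0 := by omega
  have hgap : 2 / ‖twiddle r ω - 1‖ ≤ 2 ^ r / 2 ^ j := by
    have := two_pow_div_le_norm_twiddle_sub_one hj hjr hω
    rw [div_le_div_iff₀ (lt_of_lt_of_le (by positivity) this) (by positivity)]
    rw [div_le_iff₀ (by positivity)] at this
    linarith
  calc ‖dft r (haarPhi r l p) ω‖
      ≤ 2 ^ ((l : ℝ) / 2 - r) * (2 * (2 / ‖twiddle r ω - 1‖)) :=
        norm_dft_haarPhi_le (hlj.trans hjr) hp fun b => norm_geom_sum_Ico_le_of_ne_one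
          (norm_twiddle r ω).le (twiddle_ne_one_of_mem_bandW hj hjr hω) b _
    _ ≤ 2 ^ ((l : ℝ) / 2 - r) * (2 * (2 ^ r / 2 ^ j)) := by gcongr
    _ = 2 * 2 ^ ((l : ℝ) / 2 - j) := by
        rw [Real.rpow_sub two_pos, Real.rpow_sub two_pos, Real.rpow_natCast, Real.rpow_natCast]
        field_simp

theorem norm_dft_haarPhi_le_of_mem_bandW (hl : l < r) (hjr : j < r) (hp : p < 2 ^ l) {ω : ℤ}
    (hω : ω ∈ bandW j) :
    ‖dft r (haarPhi r l p) ω‖ ≤ 2 * 2 ^ (-(j : ℝ) / 2) * 2 ^ (-|(j : ℝ) - l| / 2) := by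
  rw [mul_assoc, ← Real.rpow_add two_pos]
  rcases le_or_gt j l with hjl | hlj
  · rw [abs_of_nonpos (sub_nonpos.mpr (Nat.cast_le.mpr hjl)),
      show -(j : ℝ) / 2 + -(-((j : ℝ) - l)) / 2 = -(l : ℝ) / 2 by ring]
    have := norm_dft_haarPhi_le_rpow_neg_half hl hp ω
    have : (0 : ℝ) < 2 ^ (-(l : ℝ) / 2) := by positivity
    linarith
  · rw [abs_of_pos (sub_pos.mpr (Nat.cast_lt.mpr hlj)),
      show -(j : ℝ) / 2 + -((j : ℝ) - l) / 2 = (l : ℝ) / 2 - j by ring]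
    exact norm_dft_haarPhi_le_of_lt_of_mem_bandW hlj hjr hp hω

end Haar

theorem norm_Uentry_le {r j l q : ℕ} {ω : ℤ} (hl : l < r) (hjr : j < r) (hω : ω ∈ bandW j)
    (hq : q < numCols l) :
    ‖Uentry r l ω q‖ ≤
      Real.pi ^ 2 / 4 * 2 ^ (-(j : ℝ) / 2) * 2 ^ (-|(j : ℝ) - l| / 2) := by
  have hπ : (2 : ℝ) ≤ Real.pi ^ 2 / 4 := by nlinarith [Real.pi_gt_three]
  have hφ : ∀ p < 2 ^ l, ‖dft r (haarPhi r l p) ω‖ ≤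
      Real.pi ^ 2 / 4 * 2 ^ (-(j : ℝ) / 2) * 2 ^ (-|(j : ℝ) - l| / 2) := fun p hp =>
    (norm_dft_haarPhi_le_of_mem_bandW hl hjr hp hω).trans (by gcongr)
  unfold Uentry
  split_ifs with hl0 hq0
  · subst hl0
    rcases eq_or_ne j 0 with rfl | hj
    · refine norm_dft_haarPsi_le_one.trans ?_
      norm_num
      linarith
    · have hψ : dft r (haarPsi r) ω = 0 :=
        dft_const_eq_zero _ (twiddle_ne_one_of_mem_bandW hj hjr hω)
      rw [hψ, norm_zero]
      positivity
  · subst hl0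
    exact hφ 0 (by norm_num)
  · exact hφ q (by simpa [numCols, hl0] using hq)

theorem sqrt_coherence_le {r j l : ℕ} (hl : l < r) (hjr : j < r) :
    Real.sqrt (coherence r j l) ≤
      Real.pi ^ 2 / 4 * 2 ^ (-(j : ℝ) / 2) * 2 ^ (-|(j : ℝ) - l| / 2) := by
  rw [Real.sqrt_le_iff]
  refine ⟨by positivity, sup'_le _ _ fun ⟨ω, q⟩ hωq => ?_⟩
  rw [mem_product, mem_range] at hωq
  exact pow_le_pow_left₀ (norm_nonneg _) (norm_Uentry_le hl hjr hωq.1 hωq.2) 2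

/-- For `r ≥ 1` and `0 ≤ j, l ≤ r-1`, the local coherence of the Fourier–Haar matrix satisfies
`μ(j,l) ≤ (π⁴/16) 2^{-j} 2^{-|j-l|/2}`. -/
theorem localCoh_le (r j l : ℕ) (hr : 1 ≤ r) (hj : j ≤ r - 1) (hl : l ≤ r - 1) :
    localCoh r hr j l ≤ (Real.pi^4 / 16) * (2:ℝ)^(-(j:ℝ)) * (2:ℝ)^(-|(j:ℝ) - (l:ℝ)|/2) := by
  have hjr : j < r := by omega
  have hmax : (range r).sup' ⟨0, mem_range.mpr hr⟩ (fun l' => Real.sqrt (coherence r j l')) ≤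
      Real.pi ^ 2 / 4 * 2 ^ (-(j : ℝ) / 2) := by
    refine sup'_le _ _ fun l' hl' => (sqrt_coherence_le (mem_range.mp hl') hjr).trans ?_
    refine mul_le_of_le_one_right (by positivity) (Real.rpow_le_one_of_one_le_of_nonpos
      one_le_two ?_)
    linarith [abs_nonneg ((j : ℝ) - l')]
  have hsq : (2 : ℝ) ^ (-(j : ℝ) / 2) * 2 ^ (-(j : ℝ) / 2) = 2 ^ (-(j : ℝ)) := by
    rw [← Real.rpow_add two_pos]; ring_nf
  calc localCoh r hr j l
      ≤ (Real.pi ^ 2 / 4 * 2 ^ (-(j : ℝ) / 2) * 2 ^ (-|(j : ℝ) - l| / 2)) *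
          (Real.pi ^ 2 / 4 * 2 ^ (-(j : ℝ) / 2)) :=
        mul_le_mul (sqrt_coherence_le (by omega) hjr) hmax
          ((Real.sqrt_nonneg _).trans
            (le_sup' (fun l' => Real.sqrt (coherence r j l')) (mem_range.mpr hr))) (by positivity)
    _ = (Real.pi^4 / 16) * (2:ℝ)^(-(j:ℝ)) * (2:ℝ)^(-|(j:ℝ) - (l:ℝ)|/2) := by
        rw [← hsq]; ring
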